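/- Let I be a finite index set, η ≥ 0, and let S be any set of triples (v, d, u) with v : I → ℝ^n, d : I → ℝ, u : I → ℝ^m, such that every (v, d, u) ∈ S satisfies d_k ≥ ‖v_k‖₂² for all k ∈ I. Let c : (I → ℝ^m) → ℝ be given by c(u) = Σ_{k∈I} ‖u_k‖_q with q ≥ 1. Suppose (v̌, ď, ǔ) ∈ S satisfies ď_k = ‖v̌_k‖₂² for all k, and suppose (v*, d*, u*) minimizes the penalized objective F(v, d, u) = c(u) + η Σ_{k∈I} (d_k − 2⟨v̌_k, v_k⟩) over S. Then c(u*) + η Σ_{k∈I} ‖v*_k − v̌_k‖₂² ≤ c(ǔ); in particular Σ_{k∈I} ‖u*_k‖_q ≤ Σ_{k∈I} ‖ǔ_k‖_q. -/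
import Mathlib


/-- The squared Euclidean norm `‖v‖₂²` of a vector `v ∈ ℝⁿ`. -/
def sqnorm {n : ℕ} (v : Fin n → ℝ) : ℝ :=
  ∑ k, (v k) ^ 2

/-- The standard inner product `⟨v, w⟩` on `ℝⁿ`. -/
def iprod {n : ℕ} (v w : Fin n → ℝ) : ℝ :=
  ∑ k, v k * w k

/-- The `ℓ_q` norm `‖u‖_q = (∑ₖ |uₖ|^q)^(1/q)` on `ℝᵐ`. -/
noncomputable def pnorm {m : ℕ} (q : ℝ) (u : Fin m → ℝ) : ℝ :=
  (∑ k, |u k| ^ q) ^ (1 / q)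

/-- The control cost `c(u) = ∑_{k∈I} ‖u_k‖_q`. -/
noncomputable def ctrlCost {I : Type*} [Fintype I] {m : ℕ} (q : ℝ)
    (u : I → Fin m → ℝ) : ℝ :=
  ∑ k, pnorm q (u k)

/-- The penalized objective `F(v, d, u) = c(u) + η ∑_{k∈I} (d_k − 2⟨v̌_k, v_k⟩)`. -/
noncomputable def penObj {I : Type*} [Fintype I] {n m : ℕ} (q η : ℝ)
    (vc : I → Fin n → ℝ)
    (s : (I → Fin n → ℝ) × (I → ℝ) × (I → Fin m → ℝ)) : ℝ :=
  ctrlCost q s.2.2 + η * ∑ k, (s.2.1 k - 2 * iprod (vc k) (s.1 k))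

/-- **objective non-increase of penalized minimization.**
Let `η ≥ 0` and let `S` be any set of triples `(v, d, u)` such that every
member satisfies `d_k ≥ ‖v_k‖₂²` for all `k`. If `(v̌, ď, ǔ) ∈ S` satisfies
`ď_k = ‖v̌_k‖₂²` for all `k`, and `(v*, d*, u*)` minimizes the penalized
objective `F` over `S`, then
`c(u*) + η ∑_k ‖v*_k − v̌_k‖₂² ≤ c(ǔ)`; in particular
`∑_k ‖u*_k‖_q ≤ ∑_k ‖ǔ_k‖_q`. -/
theorem penalized_objective_nonincrease {I : Type*} [Fintype I] {n m : ℕ}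
    (q η : ℝ) (hq : 1 ≤ q) (hη : 0 ≤ η)
    (S : Set ((I → Fin n → ℝ) × (I → ℝ) × (I → Fin m → ℝ)))
    (hS : ∀ s ∈ S, ∀ k : I, sqnorm (s.1 k) ≤ s.2.1 k)
    (vc : I → Fin n → ℝ) (dc : I → ℝ) (uc : I → Fin m → ℝ)
    (hmem : (vc, dc, uc) ∈ S) (hdc : ∀ k : I, dc k = sqnorm (vc k))
    (vs : I → Fin n → ℝ) (ds : I → ℝ) (us : I → Fin m → ℝ)
    (hmin_mem : (vs, ds, us) ∈ S)
    (hmin : ∀ s ∈ S, penObj q η vc (vs, ds, us) ≤ penObj q η vc s) :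
    ctrlCost q us + η * ∑ k, sqnorm (vs k - vc k) ≤ ctrlCost q uc ∧
    (∑ k, pnorm q (us k)) ≤ ∑ k, pnorm q (uc k) := by
  have hsq : ∀ k : I, (0:ℝ) ≤ sqnorm (vs k - vc k) :=
    fun k => Finset.sum_nonneg fun j _ => sq_nonneg _
  have h1 := hmin _ hmem
  have hds := hS _ hmin_mem
  simp only [penObj] at h1
  have h2 : ∑ k, (dc k - 2 * iprod (vc k) (vc k)) = - ∑ k, sqnorm (vc k) := by
    rw [← Finset.sum_neg_distrib]
    apply Finset.sum_congr rfl
    intro k _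
    have : iprod (vc k) (vc k) = sqnorm (vc k) := by simp [iprod, sqnorm, sq]
    rw [hdc k, this]; ring
  have h3 : ∑ k, sqnorm (vs k - vc k)
      ≤ ∑ k, ((ds k - 2 * iprod (vc k) (vs k)) + sqnorm (vc k)) := by
    apply Finset.sum_le_sum
    intro k _
    have hexp : sqnorm (vs k - vc k)
        = sqnorm (vs k) - 2 * iprod (vc k) (vs k) + sqnorm (vc k) := by
      simp only [sqnorm, iprod, Finset.mul_sum, ← Finset.sum_sub_distrib,
        ← Finset.sum_add_distrib]
      apply Finset.sum_congr rfl
      intro j _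
      simp only [Pi.sub_apply]
      ring
    have := hds k
    simp only at this
    linarith [hexp]
  rw [Finset.sum_add_distrib] at h3
  rw [h2] at h1
  have key : ctrlCost q us + η * ∑ k, sqnorm (vs k - vc k) ≤ ctrlCost q uc := by
    have hm := mul_le_mul_of_nonneg_left h3 hη
    nlinarith
  refine ⟨key, ?_⟩
  have hpos : (0:ℝ) ≤ η * ∑ k, sqnorm (vs k - vc k) :=
    mul_nonneg hη (Finset.sum_nonneg fun k _ => hsq k)
  simp only [ctrlCost] at key
  linarith
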